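/- arXiv:1405.5856 — 3 statements merged into one kernel-verified Lean document; each statement's English description precedes it below -/
import Mathlib

section
/- For all positive reals α₀, …, α_n and real numbers t₀ < t_{n+1}, the iterated integral over the ordered simplex {t₀ ≤ t₁ ≤ … ≤ t_n ≤ t_{n+1}} of ∏_{i=0}^{n} (t_{i+1} - t_i)^{α_i - 1} dt₁⋯dt_n equals (t_{n+1} - t₀)^{(Σ_{i=0}^n α_i) - 1} · (∏_{i=0}^n Γ(α_i)) / Γ(Σ_{i=0}^n α_i). -/
/-!
Split off the first coordinate `t₁`: the remaining coordinates range over the ordered simplex from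
`t₁` to `T`, so by induction (generalizing the starting point) the inner integral is
`(T - t₁)^(α₁ + ⋯ + α_n - 1) · ∏_{i ≥ 1} Γ(αᵢ) / Γ(α₁ + ⋯ + α_n)`. The outer integral over
`t₁ ∈ (t₀, T)` is then a Beta integral rescaled to `(t₀, T)`, contributing
`B(α₀, α₁ + ⋯ + α_n) (T - t₀)^(∑ αᵢ - 1)`, and the Gamma factors telescope. Working with lower
Lebesgue integrals avoids all integrability side conditions.
-/

open MeasureTheory Real Set
open scoped ENNReal

lemma lintegral_pi_fin_succ_eq_lintegral_cons {X : Type*} [MeasureSpace X]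
    [SigmaFinite (volume : Measure X)] {n : ℕ} {f : (Fin (n + 1) → X) → ℝ≥0∞} (hf : Measurable f) :
    ∫⁻ t, f t = ∫⁻ x, ∫⁻ y, f (Fin.cons x y) := by
  have e := (volume_preserving_piFinSuccAbove (fun _ : Fin (n + 1) => X) 0).symm
  rw [← e.lintegral_comp hf, Measure.volume_eq_prod]
  refine (lintegral_prod _ (hf.comp e.measurable).aemeasurable).trans ?_
  simp [MeasurableEquiv.piFinSuccAbove_symm_apply, Fin.insertNthEquiv, Fin.insertNth_zero']

section Beta

open ProbabilityTheory

lemma lintegral_Ioo_zero_one_beta {s t : ℝ} (hs : 0 < s) (ht : 0 < t) :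
    ∫⁻ x in Ioo 0 1, ENNReal.ofReal (x ^ (s - 1) * (1 - x) ^ (t - 1)) =
      ENNReal.ofReal (beta s t) := by
  have hB := beta_pos hs ht
  have h := lintegral_betaPDF_eq_one hs ht
  simp_rw [lintegral_betaPDF, mul_assoc, ENNReal.ofReal_mul (one_div_pos.2 hB).le] at h
  rw [lintegral_const_mul' _ _ ENNReal.ofReal_ne_top, one_div, ENNReal.ofReal_inv_of_pos hB] at h
  exact (ENNReal.eq_inv_of_mul_eq_one_left ((mul_comm _ _).trans h)).trans (inv_inv _)

lemma lintegral_Ioo_beta {s t a b : ℝ} (hs : 0 < s) (ht : 0 < t) (hab : a < b) :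
    ∫⁻ x in Ioo a b, ENNReal.ofReal ((x - a) ^ (s - 1) * (b - x) ^ (t - 1)) =
      ENNReal.ofReal ((b - a) ^ (s + t - 1) * beta s t) := by
  set c := b - a with hc
  have hc0 : 0 < c := sub_pos.2 hab
  have himage : (c * · + a) '' Ioo 0 1 = Ioo a b := by
    rw [image_affine_Ioo hc0]; congr 1 <;> ring
  rw [← himage, lintegral_image_eq_lintegral_abs_deriv_mul (f' := fun _ => c) measurableSet_Ioo
    (fun u _ => by simpa using ((hasDerivAt_id' u).const_mul c |>.add_const a).hasDerivWithinAt)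
    (fun u _ v _ h => by simpa [hc0.ne'] using h)]
  have hscale : ∀ u ∈ Ioo (0 : ℝ) 1,
      ENNReal.ofReal |c| * ENNReal.ofReal ((c * u + a - a) ^ (s - 1) * (b - (c * u + a)) ^ (t - 1))
        = ENNReal.ofReal (c ^ (s + t - 1)) * ENNReal.ofReal (u ^ (s - 1) * (1 - u) ^ (t - 1)) := by
    rintro u ⟨hu0, hu1⟩
    have h1 : c * u + a - a = c * u := by ring
    have h2 : b - (c * u + a) = c * (1 - u) := by rw [hc]; ring
    rw [h1, h2, mul_rpow hc0.le hu0.le, mul_rpow hc0.le (by linarith), abs_of_pos hc0,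
      ← ENNReal.ofReal_mul hc0.le, ← ENNReal.ofReal_mul (by positivity)]
    congr 1
    rw [show s + t - 1 = 1 + (s - 1) + (t - 1) by ring, rpow_add hc0, rpow_add hc0, rpow_one]
    ring
  rw [setLIntegral_congr_fun measurableSet_Ioo hscale,
    lintegral_const_mul' _ _ ENNReal.ofReal_ne_top, lintegral_Ioo_zero_one_beta hs ht,
    ← ENNReal.ofReal_mul (by positivity)]

end Beta

namespace Fin

variable {X : Type*} {n : ℕ}

lemma monotone_cons_iff [Preorder X] {a : X} {f : Fin (n + 1) → X} :
    Monotone (cons a f : Fin (n + 2) → X) ↔ a ≤ f 0 ∧ Monotone f := by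
  simp [monotone_iff_le_succ (f := f), monotone_iff_le_succ (n := n + 1), forall_fin_succ]

def consSnoc (a : X) (t : Fin n → X) (b : X) : Fin (n + 2) → X := snoc (cons a t) b

lemma consSnoc_cons (a x : X) (y : Fin n → X) (b : X) :
    consSnoc a (cons x y) b = cons a (consSnoc x y b) :=
  (cons_snoc_eq_snoc_cons ..).symm

@[simp] lemma consSnoc_zero (a : X) (t : Fin n → X) (b : X) : consSnoc a t b 0 = a := by
  rw [consSnoc, ← castSucc_zero, snoc_castSucc, cons_zero]

@[simp] lemma consSnoc_last (a : X) (t : Fin n → X) (b : X) : consSnoc a t b (last _) = b := by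
  simp [consSnoc]

lemma consSnoc_elim0 (a : X) (t : Fin 0 → X) (b : X) : consSnoc a t b = ![a, b] := by
  ext i; fin_cases i <;> rfl

lemma continuous_consSnoc [TopologicalSpace X] (a b : X) :
    Continuous fun t : Fin n → X => consSnoc a t b := by
  unfold consSnoc; fun_prop

end Fin

section OrderedSimplex

variable {X : Type*} [Preorder X] {n : ℕ}

def orderedSimplex (n : ℕ) (a b : X) : Set (Fin n → X) := {t | Monotone (Fin.consSnoc a t b)}

lemma cons_mem_orderedSimplex_iff {a x b : X} {y : Fin n → X} :
    Fin.cons x y ∈ orderedSimplex (n + 1) a b ↔ a ≤ x ∧ y ∈ orderedSimplex n x b := by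
  rw [orderedSimplex, mem_ofPred_eq, Fin.consSnoc_cons, Fin.monotone_cons_iff, Fin.consSnoc_zero]
  rfl

lemma orderedSimplex_eq_empty {a b : X} (hba : b < a) : orderedSimplex n a b = ∅ :=
  eq_empty_of_forall_notMem fun t ht => hba.not_ge (by simpa using ht (Fin.zero_le (Fin.last _)))

lemma isClosed_orderedSimplex [TopologicalSpace X] [OrderClosedTopology X] (a b : X) :
    IsClosed (orderedSimplex n a b) := by
  simp_rw [orderedSimplex, Fin.monotone_iff_le_succ, ofPred_forall]
  exact isClosed_iInter fun i =>
    isClosed_le ((continuous_apply _).comp (Fin.continuous_consSnoc a b))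
      ((continuous_apply _).comp (Fin.continuous_consSnoc a b))

end OrderedSimplex

noncomputable def gapProduct {n : ℕ} (p : Fin (n + 1) → ℝ) (a : ℝ) (t : Fin n → ℝ) (b : ℝ) : ℝ :=
  ∏ i, (Fin.consSnoc a t b i.succ - Fin.consSnoc a t b i.castSucc) ^ (p i - 1)

lemma gapProduct_cons {n : ℕ} (p : Fin (n + 2) → ℝ) (a x : ℝ) (y : Fin n → ℝ) (b : ℝ) :
    gapProduct p a (Fin.cons x y) b = (x - a) ^ (p 0 - 1) * gapProduct (Fin.tail p) x y b := by
  simp [gapProduct, Fin.prod_univ_succ (n := n + 1), Fin.consSnoc_cons, Fin.tail]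

lemma gapProduct_elim0 (p : Fin 1 → ℝ) (a : ℝ) (t : Fin 0 → ℝ) (b : ℝ) :
    gapProduct p a t b = (b - a) ^ (p 0 - 1) := by
  simp [gapProduct, Fin.consSnoc_elim0]

lemma gapProduct_nonneg {n : ℕ} (p : Fin (n + 1) → ℝ) {a b : ℝ} {t : Fin n → ℝ}
    (ht : t ∈ orderedSimplex n a b) : 0 ≤ gapProduct p a t b :=
  Finset.prod_nonneg fun i _ => rpow_nonneg (sub_nonneg.2 (ht i.castSucc_le_succ)) _

lemma measurable_gapProduct {n : ℕ} (p : Fin (n + 1) → ℝ) (a b : ℝ) :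
    Measurable fun t => gapProduct p a t b := by
  have := (Fin.continuous_consSnoc (n := n) a b).measurable
  unfold gapProduct; fun_prop

lemma setLIntegral_gapProduct_succ {n : ℕ} (p : Fin (n + 2) → ℝ) (a b : ℝ) :
    ∫⁻ t in orderedSimplex (n + 1) a b, ENNReal.ofReal (gapProduct p a t b) =
      ∫⁻ x, (Ici a).indicator (fun x => ENNReal.ofReal ((x - a) ^ (p 0 - 1))) x *
        ∫⁻ y in orderedSimplex n x b, ENNReal.ofReal (gapProduct (Fin.tail p) x y b) := by
  have hS := fun (n : ℕ) (a : ℝ) => (isClosed_orderedSimplex (n := n) a b).measurableSet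
  rw [← lintegral_indicator (hS _ a), lintegral_pi_fin_succ_eq_lintegral_cons
    ((measurable_gapProduct p a b).ennreal_ofReal.indicator (hS _ a))]
  congr 1 with x
  rw [← lintegral_indicator (hS n x),
    ← lintegral_const_mul' _ _ (by by_cases hx : a ≤ x <;> simp [hx])]
  congr 1 with y
  by_cases hx : a ≤ x
  · rw [indicator_of_mem (mem_Ici.2 hx)]
    by_cases hy : y ∈ orderedSimplex n x b
    · rw [indicator_of_mem (cons_mem_orderedSimplex_iff.2 ⟨hx, hy⟩), indicator_of_mem hy,
        gapProduct_cons, ENNReal.ofReal_mul (rpow_nonneg (sub_nonneg.2 hx) _)]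
    · rw [indicator_of_notMem (fun h => hy (cons_mem_orderedSimplex_iff.1 h).2),
        indicator_of_notMem hy, mul_zero]
  · rw [indicator_of_notMem (fun h => hx (cons_mem_orderedSimplex_iff.1 h).1),
      indicator_of_notMem (notMem_Ici.2 (not_le.1 hx)), zero_mul]

theorem setLIntegral_gapProduct_orderedSimplex {n : ℕ} (p : Fin (n + 1) → ℝ) (hp : ∀ i, 0 < p i)
    {a b : ℝ} (hab : a < b) :
    ∫⁻ t in orderedSimplex n a b, ENNReal.ofReal (gapProduct p a t b) =
      ENNReal.ofReal ((b - a) ^ (∑ i, p i - 1) * ((∏ i, Gamma (p i)) / Gamma (∑ i, p i))) := by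
  induction n generalizing a with
  | zero =>
    have huniv : orderedSimplex 0 a b = univ := eq_univ_of_forall fun t => by
      simp [orderedSimplex, Fin.consSnoc_elim0, Fin.monotone_iff_le_succ, Fin.forall_fin_one, hab.le]
    simp [huniv, gapProduct_elim0, (Gamma_pos_of_pos (hp 0)).ne', volume_pi]
  | succ m ih =>
    have hS' : 0 < ∑ i, Fin.tail p i := Finset.sum_pos (fun i _ => hp _) Finset.univ_nonempty
    set C' := (∏ i, Gamma (Fin.tail p i)) / Gamma (∑ i, Fin.tail p i)
    have hslice : (fun x => (Ici a).indicator (fun x => ENNReal.ofReal ((x - a) ^ (p 0 - 1))) x *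
        ∫⁻ y in orderedSimplex m x b, ENNReal.ofReal (gapProduct (Fin.tail p) x y b)) =ᵐ[volume]
        fun x => (Ioo a b).indicator
          (fun x => ENNReal.ofReal ((x - a) ^ (p 0 - 1) * (b - x) ^ (∑ i, Fin.tail p i - 1))) x *
            ENNReal.ofReal C' := by
      filter_upwards [Measure.ae_ne volume a, Measure.ae_ne volume b] with x hxa hxb
      rcases lt_or_gt_of_ne hxa with hxa | hxa
      · simp [indicator_of_notMem (notMem_Ici.2 hxa),
          indicator_of_notMem (fun h : x ∈ Ioo a b => hxa.not_gt h.1)]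
      rcases lt_or_gt_of_ne hxb with hxb | hxb
      · simp only [indicator_of_mem (mem_Ici.2 hxa.le), indicator_of_mem (mem_Ioo.2 ⟨hxa, hxb⟩),
          ih (Fin.tail p) (fun i => hp _) hxb, mul_assoc,
          ENNReal.ofReal_mul (rpow_nonneg (sub_nonneg.2 hxa.le) _),
          ENNReal.ofReal_mul (rpow_nonneg (sub_nonneg.2 hxb.le) _)]
        rfl
      · simp [orderedSimplex_eq_empty hxb, hxb.not_gt]
    have hB := ProbabilityTheory.beta_pos (hp 0) hS'
    rw [setLIntegral_gapProduct_succ, lintegral_congr_ae hslice,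
      lintegral_mul_const' _ _ ENNReal.ofReal_ne_top, lintegral_indicator measurableSet_Ioo,
      lintegral_Ioo_beta (hp 0) hS' hab, ← ENNReal.ofReal_mul (by positivity)]
    congr 1
    have := (Gamma_pos_of_pos hS').ne'
    rw [Fin.sum_univ_succ p, Fin.prod_univ_succ (fun i => Gamma (p i)), ProbabilityTheory.beta]
    simp only [C', Fin.tail] at this ⊢
    field_simp

theorem setIntegral_gapProduct_orderedSimplex {n : ℕ} (p : Fin (n + 1) → ℝ) (hp : ∀ i, 0 < p i)
    {a b : ℝ} (hab : a < b) :
    ∫ t in orderedSimplex n a b, gapProduct p a t b =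
      (b - a) ^ (∑ i, p i - 1) * ((∏ i, Gamma (p i)) / Gamma (∑ i, p i)) := by
  have hS := (isClosed_orderedSimplex (n := n) a b).measurableSet
  rw [integral_eq_lintegral_of_nonneg_ae
      ((ae_restrict_iff' hS).2 (ae_of_all _ fun t => gapProduct_nonneg p))
      (measurable_gapProduct p a b).aestronglyMeasurable,
    setLIntegral_gapProduct_orderedSimplex p hp hab, ENNReal.toReal_ofReal]
  have hΓ : 0 < Gamma (∑ i, p i) :=
    Gamma_pos_of_pos (Finset.sum_pos (fun i _ => hp i) Finset.univ_nonempty)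
  exact mul_nonneg (rpow_nonneg (sub_nonneg.2 hab.le) _)
    (div_nonneg (Finset.prod_nonneg fun i _ => (Gamma_pos_of_pos (hp i)).le) hΓ.le)

/-- generalized Beta integral over the ordered simplex. -/
theorem stmt1 (n : ℕ) (α : Fin (n + 1) → ℝ) (hα : ∀ i, 0 < α i)
    (t0 T : ℝ) (h : t0 < T) :
    (∫ t in {t : Fin n → ℝ | Monotone (Fin.snoc (Fin.cons t0 t : Fin (n + 1) → ℝ) T)},
        ∏ i : Fin (n + 1),
          ((Fin.snoc (Fin.cons t0 t : Fin (n + 1) → ℝ) T : Fin (n + 2) → ℝ) i.succ -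
            (Fin.snoc (Fin.cons t0 t : Fin (n + 1) → ℝ) T : Fin (n + 2) → ℝ) i.castSucc)
            ^ (α i - 1)) =
      (T - t0) ^ ((∑ i, α i) - 1) *
        ((∏ i, Real.Gamma (α i)) / Real.Gamma (∑ i, α i)) :=
  setIntegral_gapProduct_orderedSimplex α hα h
end

section
/- Let δ₁ ∈ (0, 1/2) and q' ∈ (1,∞) with δ₁ q' < 1. Then there is a constant c = c(δ₁, q') such that for every ℓ ≥ 1, η_ℓ := ( Γ(δ₁ q')^ℓ Γ((δ₁ + 1/2) q') / Γ((1/2 + (ℓ+1) δ₁) q') )^{1/q'} ≤ c^ℓ (ℓ δ₁)^{-ℓ δ₁}. -/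
open Real

set_option maxHeartbeats 1000000

/-- Log-convexity consequence: `Γ(θx+(1-θ)y) ≤ Γ(x)^θ Γ(y)^(1-θ)`. -/
lemma gamma_interp_le (x y θ : ℝ) (hx : 0 < x) (hy : 0 < y) (hθ : 0 ≤ θ) (hθ1 : θ ≤ 1) :
    Real.Gamma (θ * x + (1 - θ) * y) ≤ Real.Gamma x ^ θ * Real.Gamma y ^ (1 - θ) := by
  have hcomb : (0:ℝ) < θ * x + (1 - θ) * y := by
    rcases eq_or_lt_of_le hθ with h0 | h0
    · rw [← h0]; norm_num; exact hy
    · nlinarith [mul_pos h0 hx, mul_nonneg (sub_nonneg.2 hθ1) hy.le]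
  have h := Real.convexOn_log_Gamma.2 (Set.mem_Ioi.2 hx) (Set.mem_Ioi.2 hy)
    hθ (sub_nonneg.2 hθ1) (by ring)
  simp only [smul_eq_mul, Function.comp_apply] at h
  have hGx := Real.Gamma_pos_of_pos hx
  have hGy := Real.Gamma_pos_of_pos hy
  have hGc := Real.Gamma_pos_of_pos hcomb
  calc Real.Gamma (θ * x + (1 - θ) * y)
      = Real.exp (Real.log (Real.Gamma (θ * x + (1 - θ) * y))) := (Real.exp_log hGc).symm
    _ ≤ Real.exp (θ * Real.log (Real.Gamma x) + (1 - θ) * Real.log (Real.Gamma y)) :=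
        Real.exp_le_exp.2 h
    _ = Real.Gamma x ^ θ * Real.Gamma y ^ (1 - θ) := by
        rw [Real.exp_add, Real.rpow_def_of_pos hGx, Real.rpow_def_of_pos hGy,
          mul_comm (Real.log _), mul_comm (Real.log _)]

/-- Gautschi-type lower bound: `Γ(s+a) (s+a)^(1-a) ≥ s Γ(s)` for `0 < a ≤ 1`, `s > 0`. -/
lemma gamma_ratio_bound (a s : ℝ) (ha : 0 < a) (ha1 : a ≤ 1) (hs : 0 < s) :
    Real.Gamma s * s ≤ Real.Gamma (s + a) * (s + a) ^ (1 - a) := by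
  have hsa : 0 < s + a := by linarith
  have hG : 0 < Real.Gamma (s + a) := Real.Gamma_pos_of_pos hsa
  have h1 : Real.Gamma (s + 1) ≤ Real.Gamma (s + a) ^ a * Real.Gamma (s + a + 1) ^ (1 - a) := by
    have h := gamma_interp_le (s + a) (s + a + 1) a hsa (by linarith) ha.le ha1
    have harg : a * (s + a) + (1 - a) * (s + a + 1) = s + 1 := by ring
    rwa [harg] at h
  rw [Real.Gamma_add_one hs.ne', Real.Gamma_add_one hsa.ne'] at h1
  have h2 : Real.Gamma (s + a) ^ a * ((s + a) * Real.Gamma (s + a)) ^ (1 - a)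
      = Real.Gamma (s + a) * (s + a) ^ (1 - a) := by
    rw [Real.mul_rpow hsa.le hG.le]
    rw [show Real.Gamma (s + a) ^ a * ((s + a) ^ (1 - a) * Real.Gamma (s + a) ^ (1 - a)) =
      (Real.Gamma (s + a) ^ a * Real.Gamma (s + a) ^ (1 - a)) * (s + a) ^ (1 - a) by ring,
      ← Real.rpow_add hG]
    norm_num
  rw [h2] at h1
  linarith [h1]

/-- Stirling-type bound `η_ℓ ≤ c^ℓ (ℓδ₁)^{-ℓδ₁}` for the Gamma ratio. -/
theorem stmt13 (δ₁ q' : ℝ) (h1 : 0 < δ₁) (h2 : δ₁ < 1 / 2) (hq : 1 < q')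
    (h3 : δ₁ * q' < 1) :
    ∃ c > 0, ∀ ℓ : ℕ, 1 ≤ ℓ →
      (Real.Gamma (δ₁ * q') ^ ℓ * Real.Gamma ((δ₁ + 1 / 2) * q') /
          Real.Gamma ((1 / 2 + ((ℓ : ℝ) + 1) * δ₁) * q')) ^ (1 / q') ≤
        c ^ ℓ * ((ℓ : ℝ) * δ₁) ^ (-((ℓ : ℝ) * δ₁)) := by
  have hq0 : (0:ℝ) < q' := by linarith
  set a : ℝ := δ₁ * q' with hadef
  set b : ℝ := (δ₁ + 1 / 2) * q' with hbdef
  have ha : 0 < a := by rw [hadef]; positivity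
  have ha1 : a < 1 := h3
  have hb : 0 < b := by rw [hbdef]; positivity
  have hab : a < b := by rw [hadef, hbdef]; nlinarith
  have hGa : 0 < Real.Gamma a := Real.Gamma_pos_of_pos ha
  have hGb : 0 < Real.Gamma b := Real.Gamma_pos_of_pos hb
  have hGab : 0 < Real.Gamma (a + b) := Real.Gamma_pos_of_pos (by linarith)
  set C : ℝ := 2 * Real.Gamma a * Real.exp 1 + Real.Gamma a * Real.Gamma b / Real.Gamma (a + b) + 1
    with hCdef
  have hC1 : 1 ≤ C := by
    have e1 : 0 < 2 * Real.Gamma a * Real.exp 1 := by positivity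
    have e2 : 0 < Real.Gamma a * Real.Gamma b / Real.Gamma (a + b) := by positivity
    rw [hCdef]; linarith
  have hC0 : 0 < C := by linarith
  -- main induction
  have main : ∀ ℓ : ℕ, 1 ≤ ℓ →
      Real.Gamma a ^ ℓ * Real.Gamma b / Real.Gamma (b + ℓ * a) ≤
        C ^ ℓ * ((ℓ : ℝ) * δ₁) ^ (-((ℓ : ℝ) * δ₁ * q')) := by
    intro ℓ hℓ
    induction ℓ, hℓ using Nat.le_induction with
    | base =>
        simp only [pow_one, Nat.cast_one, one_mul]
        have hd1 : δ₁ ^ (0:ℝ) ≤ δ₁ ^ (-(δ₁ * q')) :=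
          Real.rpow_le_rpow_of_exponent_ge h1 (by linarith) (by nlinarith)
        rw [Real.rpow_zero] at hd1
        have hbase : Real.Gamma a * Real.Gamma b / Real.Gamma (b + a) ≤ C := by
          rw [add_comm b a, hCdef]
          have e1 : 0 < 2 * Real.Gamma a * Real.exp 1 := by positivity
          linarith
        calc Real.Gamma a * Real.Gamma b / Real.Gamma (b + a) ≤ C := hbase
          _ = C * 1 := (mul_one C).symm
          _ ≤ C * δ₁ ^ (-(δ₁ * q')) := mul_le_mul_of_nonneg_left hd1 hC0.le
    | succ ℓ hℓ ih =>
        have hl1 : (1:ℝ) ≤ (ℓ:ℝ) := by exact_mod_cast hℓ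
        have hl0 : (0:ℝ) < (ℓ:ℝ) := by linarith
        set s : ℝ := b + ℓ * a with hsdef
        have hs : 0 < s := by rw [hsdef]; positivity
        have hsa : 0 < s + a := by linarith
        have hGs : 0 < Real.Gamma s := Real.Gamma_pos_of_pos hs
        have hGsa : 0 < Real.Gamma (s + a) := Real.Gamma_pos_of_pos hsa
        have hu : (0:ℝ) < (ℓ:ℝ) * δ₁ := by positivity
        have hv : (0:ℝ) < ((ℓ:ℝ) + 1) * δ₁ := by positivity
        -- step bound for the extra Beta factor
        have hstep : Real.Gamma a * Real.Gamma s / Real.Gamma (s + a) ≤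
            C * (((((ℓ:ℝ) + 1) * δ₁) ^ (-((((ℓ:ℝ) + 1) * δ₁) * q'))) *
              (((ℓ:ℝ) * δ₁) ^ (((ℓ:ℝ) * δ₁) * q'))) := by
          have key := gamma_ratio_bound a s ha ha1.le hs
          have h4' : Real.Gamma s / Real.Gamma (s + a) ≤ (s + a) ^ (1 - a) / s := by
            rw [div_le_div_iff₀ hGsa hs]
            linarith [key]
          have h4 : Real.Gamma a * Real.Gamma s / Real.Gamma (s + a) ≤
              Real.Gamma a * ((s + a) ^ (1 - a) / s) := by
            rw [mul_div_assoc]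
            exact mul_le_mul_of_nonneg_left h4' hGa.le
          have h5 : (s + a) ^ (1 - a) / s ≤ 2 * (s + a) ^ (-a) := by
            have hsplit : (s + a) ^ (1 - a) = (s + a) * (s + a) ^ (-a) := by
              rw [show (1 : ℝ) - a = 1 + (-a) by ring, Real.rpow_add hsa, Real.rpow_one]
            rw [hsplit, div_le_iff₀ hs]
            have h2s : s + a ≤ 2 * s := by
              have hle : a ≤ s := by
                have h0 : (0:ℝ) ≤ (ℓ:ℝ) * a := by positivity
                rw [hsdef]; linarith
              linarith
            have hpow : (0:ℝ) < (s + a) ^ (-a) := Real.rpow_pos_of_pos hsa _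
            nlinarith
          have h6 : (s + a) ^ (-a) ≤ ((((ℓ:ℝ) + 1) * δ₁) * q') ^ (-a) := by
            apply Real.rpow_le_rpow_of_nonpos (by positivity) _ (by linarith)
            rw [hsdef, hadef]
            nlinarith
          have h7 : ((((ℓ:ℝ) + 1) * δ₁) * q') ^ (-a) =
              (((ℓ:ℝ) + 1) * δ₁) ^ (-a) * q' ^ (-a) :=
            Real.mul_rpow hv.le hq0.le
          have h8 : q' ^ (-a) ≤ 1 := by
            rw [show (1:ℝ) = q' ^ (0:ℝ) by rw [Real.rpow_zero]]
            exact Real.rpow_le_rpow_of_exponent_le hq.le (by linarith)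
          have hrhs : (((ℓ:ℝ) + 1) * δ₁) ^ (-((((ℓ:ℝ) + 1) * δ₁) * q')) *
              ((ℓ:ℝ) * δ₁) ^ (((ℓ:ℝ) * δ₁) * q') =
              (((ℓ:ℝ) + 1) * δ₁) ^ (-a) * ((ℓ:ℝ) / ((ℓ:ℝ) + 1)) ^ ((ℓ:ℝ) * a) := by
            have e1 : -((((ℓ:ℝ) + 1) * δ₁) * q') = (-a) + (-((ℓ:ℝ) * a)) := by
              rw [hadef]; ring
            have e2 : ((ℓ:ℝ) * δ₁) * q' = (ℓ:ℝ) * a := by rw [hadef]; ring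
            rw [e1, e2, Real.rpow_add hv, mul_assoc]
            congr 1
            rw [Real.rpow_neg hv.le, inv_mul_eq_div, ← Real.div_rpow hu.le hv.le]
            congr 1
            field_simp
          have h9 : Real.exp (-1) ≤ ((ℓ:ℝ) / ((ℓ:ℝ) + 1)) ^ ((ℓ:ℝ) * a) := by
            have hinv0 : ((ℓ:ℝ) / ((ℓ:ℝ) + 1)) = ((((ℓ:ℝ) + 1) / (ℓ:ℝ)))⁻¹ := by
              rw [inv_div]
            have hinv : ((ℓ:ℝ) / ((ℓ:ℝ) + 1)) ^ ((ℓ:ℝ) * a) =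
                ((((ℓ:ℝ) + 1) / (ℓ:ℝ)) ^ ((ℓ:ℝ) * a))⁻¹ := by
              rw [hinv0, Real.inv_rpow (by positivity)]
            rw [hinv, Real.exp_neg]
            apply inv_anti₀ (by positivity)
            have hbig : (((ℓ:ℝ) + 1) / (ℓ:ℝ)) ^ ((ℓ:ℝ) * a) ≤
                Real.exp ((1 / (ℓ:ℝ)) * ((ℓ:ℝ) * a)) := by
              rw [Real.exp_mul]
              apply Real.rpow_le_rpow (by positivity) _ (by positivity)
              calc ((ℓ:ℝ) + 1) / (ℓ:ℝ) = 1 / (ℓ:ℝ) + 1 := by field_simp; ring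
                _ ≤ Real.exp (1 / (ℓ:ℝ)) := Real.add_one_le_exp _
            have he : (1 / (ℓ:ℝ)) * ((ℓ:ℝ) * a) = a := by field_simp
            rw [he] at hbig
            calc (((ℓ:ℝ) + 1) / (ℓ:ℝ)) ^ ((ℓ:ℝ) * a) ≤ Real.exp a := hbig
              _ ≤ Real.exp 1 := Real.exp_le_exp.2 ha1.le
          have hvpow : (0:ℝ) < (((ℓ:ℝ) + 1) * δ₁) ^ (-a) := Real.rpow_pos_of_pos hv _
          have hCbig : 2 * Real.Gamma a ≤ C * Real.exp (-1) := by
            have hE : Real.exp 1 * Real.exp (-1) = 1 := by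
              rw [← Real.exp_add]; norm_num
            have hpos : 0 < Real.Gamma a * Real.Gamma b / Real.Gamma (a + b) + 1 := by positivity
            have hEneg : (0:ℝ) < Real.exp (-1) := Real.exp_pos _
            calc 2 * Real.Gamma a = 2 * Real.Gamma a * (Real.exp 1 * Real.exp (-1)) := by
                  rw [hE, mul_one]
              _ = (2 * Real.Gamma a * Real.exp 1) * Real.exp (-1) := by ring
              _ ≤ C * Real.exp (-1) := by
                  apply mul_le_mul_of_nonneg_right _ hEneg.le
                  rw [hCdef]; linarith
          rw [hrhs]
          calc Real.Gamma a * Real.Gamma s / Real.Gamma (s + a)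
              ≤ Real.Gamma a * ((s + a) ^ (1 - a) / s) := h4
            _ ≤ Real.Gamma a * (2 * (s + a) ^ (-a)) := mul_le_mul_of_nonneg_left h5 hGa.le
            _ = 2 * Real.Gamma a * (s + a) ^ (-a) := by ring
            _ ≤ 2 * Real.Gamma a * (((((ℓ:ℝ) + 1) * δ₁) * q') ^ (-a)) :=
                mul_le_mul_of_nonneg_left h6 (by positivity)
            _ = (2 * Real.Gamma a * q' ^ (-a)) * ((((ℓ:ℝ) + 1) * δ₁) ^ (-a)) := by
                rw [h7]; ring
            _ ≤ (C * (((ℓ:ℝ) / ((ℓ:ℝ) + 1)) ^ ((ℓ:ℝ) * a))) * ((((ℓ:ℝ) + 1) * δ₁) ^ (-a)) := by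
                apply mul_le_mul_of_nonneg_right _ hvpow.le
                calc 2 * Real.Gamma a * q' ^ (-a) ≤ 2 * Real.Gamma a * 1 :=
                      mul_le_mul_of_nonneg_left h8 (by positivity)
                  _ = 2 * Real.Gamma a := mul_one _
                  _ ≤ C * Real.exp (-1) := hCbig
                  _ ≤ C * (((ℓ:ℝ) / ((ℓ:ℝ) + 1)) ^ ((ℓ:ℝ) * a)) :=
                      mul_le_mul_of_nonneg_left h9 hC0.le
            _ = C * ((((ℓ:ℝ) + 1) * δ₁) ^ (-a) * (((ℓ:ℝ) / ((ℓ:ℝ) + 1)) ^ ((ℓ:ℝ) * a))) := by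
                ring
        -- multiply IH with the step bound
        have hsplitL : Real.Gamma a ^ (ℓ + 1) * Real.Gamma b / Real.Gamma (b + (↑(ℓ + 1) : ℝ) * a)
            = (Real.Gamma a ^ ℓ * Real.Gamma b / Real.Gamma s) *
              (Real.Gamma a * Real.Gamma s / Real.Gamma (s + a)) := by
          have harg : b + (↑(ℓ + 1) : ℝ) * a = s + a := by
            push_cast; rw [hsdef]; ring
          rw [harg, pow_succ]
          field_simp
        have hL1nn : (0:ℝ) ≤ Real.Gamma a ^ ℓ * Real.Gamma b / Real.Gamma s := by positivity
        have hR1nn : (0:ℝ) ≤ C ^ ℓ * ((ℓ:ℝ) * δ₁) ^ (-((ℓ:ℝ) * δ₁ * q')) := by positivity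
        have hL2nn : (0:ℝ) ≤ Real.Gamma a * Real.Gamma s / Real.Gamma (s + a) := by positivity
        have hmul := mul_le_mul ih hstep hL2nn hR1nn
        rw [← hsplitL] at hmul
        have hfin : (C ^ ℓ * ((ℓ:ℝ) * δ₁) ^ (-((ℓ:ℝ) * δ₁ * q'))) *
            (C * (((((ℓ:ℝ) + 1) * δ₁) ^ (-((((ℓ:ℝ) + 1) * δ₁) * q'))) *
              (((ℓ:ℝ) * δ₁) ^ (((ℓ:ℝ) * δ₁) * q')))) =
            C ^ (ℓ + 1) * ((↑(ℓ + 1) : ℝ) * δ₁) ^ (-((↑(ℓ + 1) : ℝ) * δ₁ * q')) := by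
          have hcancel : ((ℓ:ℝ) * δ₁) ^ (-((ℓ:ℝ) * δ₁ * q')) *
              ((ℓ:ℝ) * δ₁) ^ (((ℓ:ℝ) * δ₁) * q') = 1 := by
            rw [← Real.rpow_add hu]
            norm_num
          have hcast : ((↑(ℓ + 1) : ℝ)) = (ℓ:ℝ) + 1 := by push_cast; ring
          rw [hcast, pow_succ]
          calc (C ^ ℓ * ((ℓ:ℝ) * δ₁) ^ (-((ℓ:ℝ) * δ₁ * q'))) *
              (C * (((((ℓ:ℝ) + 1) * δ₁) ^ (-((((ℓ:ℝ) + 1) * δ₁) * q'))) *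
                (((ℓ:ℝ) * δ₁) ^ (((ℓ:ℝ) * δ₁) * q')))) =
              (C ^ ℓ * C) * ((((ℓ:ℝ) + 1) * δ₁) ^ (-((((ℓ:ℝ) + 1) * δ₁) * q'))) *
                (((ℓ:ℝ) * δ₁) ^ (-((ℓ:ℝ) * δ₁ * q')) *
                  ((ℓ:ℝ) * δ₁) ^ (((ℓ:ℝ) * δ₁) * q')) := by ring
            _ = (C ^ ℓ * C) * ((((ℓ:ℝ) + 1) * δ₁) ^ (-((((ℓ:ℝ) + 1) * δ₁) * q'))) := by
                rw [hcancel, mul_one]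
            _ = C ^ ℓ * C * ((((ℓ:ℝ) + 1) * δ₁) ^ (-(((ℓ:ℝ) + 1) * δ₁ * q'))) := by
                norm_num
        rw [hfin] at hmul
        exact hmul
  -- conclude
  refine ⟨C ^ (1 / q'), Real.rpow_pos_of_pos hC0 _, ?_⟩
  intro ℓ hℓ
  have hl1 : (1:ℝ) ≤ (ℓ:ℝ) := by exact_mod_cast hℓ
  have hu0 : (0:ℝ) ≤ (ℓ:ℝ) * δ₁ := by positivity
  have harg : (1 / 2 + ((ℓ:ℝ) + 1) * δ₁) * q' = b + ℓ * a := by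
    rw [hadef, hbdef]; ring
  rw [harg]
  have hGd : 0 < Real.Gamma (b + ℓ * a) := Real.Gamma_pos_of_pos (by positivity)
  have hX0 : (0:ℝ) ≤ Real.Gamma a ^ ℓ * Real.Gamma b / Real.Gamma (b + ℓ * a) := by positivity
  have h := main ℓ hℓ
  calc (Real.Gamma a ^ ℓ * Real.Gamma b / Real.Gamma (b + ℓ * a)) ^ (1 / q')
      ≤ (C ^ ℓ * ((ℓ:ℝ) * δ₁) ^ (-((ℓ:ℝ) * δ₁ * q'))) ^ (1 / q') :=
        Real.rpow_le_rpow hX0 h (by positivity)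
    _ = (C ^ (1 / q')) ^ ℓ * ((ℓ:ℝ) * δ₁) ^ (-((ℓ:ℝ) * δ₁)) := by
        rw [Real.mul_rpow (by positivity) (Real.rpow_nonneg hu0 _)]
        congr 1
        · rw [← Real.rpow_natCast C ℓ, ← Real.rpow_mul hC0.le,
            mul_comm ((ℓ:ℕ):ℝ) (1 / q'), Real.rpow_mul hC0.le, Real.rpow_natCast]
        · rw [← Real.rpow_mul hu0]
          congr 1
          field_simp
end

section
/- Let p(z,s) = (4πνs)^{-d/2} exp(-|z|²/(4νs)). There is a constant c(d) such that for any second-order spatial derivative p^{(2)} of p, all z₁, z₂ ∈ ℝ^d and 0 < t₁ ≤ t₂ ≤ 2t₁ with |z₂ - z₁|² ≥ d ν t₁: |p^{(2)}(z₂ - z₁, t₂ - t₁)| ≤ c(d) (ν(t₂ - t₁))^{-1/2} (ν t₁)^{-1/2} p(z₂ - z₁, 4(t₂ - t₁)). -/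
open MeasureTheory Real
open scoped ENNReal

noncomputable def heatKernel (d : ℕ) (ν s : ℝ) : EuclideanSpace ℝ (Fin d) → ℝ :=
  fun x => (4 * Real.pi * ν * s) ^ (-(d : ℝ) / 2) * Real.exp (-‖x‖ ^ 2 / (4 * ν * s))

noncomputable def pderiv {d : ℕ} (i : Fin d)
    (f : EuclideanSpace ℝ (Fin d) → ℝ) : EuclideanSpace ℝ (Fin d) → ℝ :=
  fun x => fderiv ℝ f x (EuclideanSpace.single i 1)

/-!
Differentiating the Gaussian twice gives
`∂ᵢ∂ⱼ p(x, s) = ((2νs)⁻² xᵢxⱼ - (2νs)⁻¹ δᵢⱼ) p(x, s)`, and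
`p(x, s) = 2ᵈ exp(-3|x|²/(16νs)) p(x, 4s)`. Since `uⁿ e⁻ᵘ ≤ n!`, the spare Gaussian factor
absorbs the polynomial prefactor up to one power of `|x|²/(νs)`, so
`|x|² |∂ᵢ∂ⱼ p(x, s)| ≤ c(d) p(x, 4s)` for every `x`. On the region in question
`ν(t₂ - t₁) ≤ νt₁ ≤ |z₂ - z₁|²`, hence `|z₂ - z₁|⁻² ≤ (ν(t₂ - t₁))^(-1/2) (νt₁)^(-1/2)`.
-/

lemma Real.pow_mul_exp_neg_le_factorial {u : ℝ} (hu : 0 ≤ u) (n : ℕ) :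
    u ^ n * exp (-u) ≤ n.factorial := by
  rw [exp_neg, ← div_eq_mul_inv, div_le_iff₀ (exp_pos u), mul_comm,
    ← div_le_iff₀ (by positivity)]
  exact pow_div_factorial_le_exp u hu n

lemma Real.inv_le_rpow_neg_half_mul_rpow_neg_half {a b y : ℝ} (ha : 0 < a) (hb : 0 < b)
    (hay : a ≤ y) (hby : b ≤ y) : y⁻¹ ≤ a ^ (-(1 : ℝ) / 2) * b ^ (-(1 : ℝ) / 2) := by
  have hy : 0 < y := ha.trans_le hay
  have hhalf : -(1 : ℝ) / 2 ≤ 0 := by norm_num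
  calc y⁻¹ = y ^ (-(1 : ℝ) / 2) * y ^ (-(1 : ℝ) / 2) := by
        rw [← rpow_add hy, ← rpow_neg_one]; norm_num
    _ ≤ a ^ (-(1 : ℝ) / 2) * b ^ (-(1 : ℝ) / 2) :=
        mul_le_mul (rpow_le_rpow_of_nonpos ha hay hhalf)
          (rpow_le_rpow_of_nonpos hb hby hhalf) (by positivity) (by positivity)

section HeatKernel

variable {d : ℕ} {ν s : ℝ}

lemma heatKernel_pos (hν : 0 < ν) (hs : 0 < s) (x : EuclideanSpace ℝ (Fin d)) :
    0 < heatKernel d ν s x := by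
  unfold heatKernel
  positivity

lemma hasFDerivAt_heatKernel (hν : 0 < ν) (hs : 0 < s) (x : EuclideanSpace ℝ (Fin d)) :
    HasFDerivAt (heatKernel d ν s)
      ((-(2 * ν * s)⁻¹ * heatKernel d ν s x) • innerSL ℝ x) x := by
  have hgauss := (((hasStrictFDerivAt_norm_sq x).hasFDerivAt.mul_const
    (-(4 * ν * s)⁻¹)).exp).const_mul ((4 * Real.pi * ν * s) ^ (-(d : ℝ) / 2))
  have hrw : heatKernel d ν s = fun y => (4 * Real.pi * ν * s) ^ (-(d : ℝ) / 2) *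
      exp (‖y‖ ^ 2 * -(4 * ν * s)⁻¹) := by
    funext y
    simp only [heatKernel, div_eq_mul_inv, neg_mul, mul_neg]
  rw [hrw]
  refine hgauss.congr_fderiv ?_
  ext v
  simp only [FunLike.coe_smul, Pi.smul_apply, smul_eq_mul, nsmul_eq_mul,
    Nat.cast_ofNat, Pi.mul_apply, Pi.ofNat_apply]
  field_simp
  ring

lemma pderiv_heatKernel (hν : 0 < ν) (hs : 0 < s) (j : Fin d) :
    pderiv j (heatKernel d ν s) = fun x => -(2 * ν * s)⁻¹ * x j * heatKernel d ν s x := by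
  funext x
  simp only [pderiv, (hasFDerivAt_heatKernel hν hs x).fderiv, FunLike.coe_smul, Pi.smul_apply,
    innerSL_apply_apply, EuclideanSpace.inner_single_right, conj_trivial, smul_eq_mul]
  ring

lemma pderiv_pderiv_heatKernel (hν : 0 < ν) (hs : 0 < s) (i j : Fin d)
    (x : EuclideanSpace ℝ (Fin d)) :
    pderiv i (pderiv j (heatKernel d ν s)) x =
      ((2 * ν * s)⁻¹ ^ 2 * x i * x j - (2 * ν * s)⁻¹ * EuclideanSpace.single i (1 : ℝ) j) *
        heatKernel d ν s x := by
  have hcoord : HasFDerivAt (fun y : EuclideanSpace ℝ (Fin d) => y j)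
      (EuclideanSpace.proj j : EuclideanSpace ℝ (Fin d) →L[ℝ] ℝ) x :=
    (EuclideanSpace.proj j : EuclideanSpace ℝ (Fin d) →L[ℝ] ℝ).hasFDerivAt
  have h : HasFDerivAt (fun y => -(2 * ν * s)⁻¹ * y j * heatKernel d ν s y) _ x :=
    (hcoord.const_mul (-(2 * ν * s)⁻¹)).mul (hasFDerivAt_heatKernel hν hs x)
  rw [pderiv_heatKernel hν hs j, pderiv, h.fderiv]
  simp only [add_apply, smul_apply, neg_smul, smul_neg, neg_apply, coe_innerSL_apply,
    EuclideanSpace.inner_single_right, conj_trivial, smul_eq_mul, PiLp.proj_apply,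
    PiLp.single_apply]
  split_ifs <;> ring

lemma abs_pderiv_pderiv_heatKernel_le (hν : 0 < ν) (hs : 0 < s) (i j : Fin d)
    (x : EuclideanSpace ℝ (Fin d)) :
    |pderiv i (pderiv j (heatKernel d ν s)) x| ≤
      ((2 * ν * s)⁻¹ + (2 * ν * s)⁻¹ ^ 2 * ‖x‖ ^ 2) * heatKernel d ν s x := by
  have hp := heatKernel_pos hν hs x
  rw [pderiv_pderiv_heatKernel hν hs, abs_mul, abs_of_pos hp]
  gcongr
  set a := (2 * ν * s)⁻¹
  set δ := EuclideanSpace.single i (1 : ℝ) j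
  have ha : 0 ≤ a := by positivity
  have hδ : |δ| ≤ 1 := by
    simp only [δ, PiLp.single_apply]
    split_ifs <;> norm_num
  have hxi : |x i| ≤ ‖x‖ := PiLp.norm_apply_le x i
  have hxj : |x j| ≤ ‖x‖ := PiLp.norm_apply_le x j
  calc |a ^ 2 * x i * x j - a * δ| ≤ |a ^ 2 * x i * x j| + |a * δ| := abs_sub _ _
    _ = a ^ 2 * (|x i| * |x j|) + a * |δ| := by
        simp only [abs_mul, abs_pow, abs_of_nonneg ha]; ring
    _ ≤ a ^ 2 * (‖x‖ * ‖x‖) + a * 1 := by gcongr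
    _ = a + a ^ 2 * ‖x‖ ^ 2 := by ring

lemma heatKernel_eq_mul_heatKernel_four_mul (hν : 0 < ν) (hs : 0 < s)
    (x : EuclideanSpace ℝ (Fin d)) :
    heatKernel d ν s x =
      2 ^ d * exp (-(3 * ‖x‖ ^ 2) / (16 * ν * s)) * heatKernel d ν (4 * s) x := by
  have hfour : (4 : ℝ) ^ (-(d : ℝ) / 2) = (2 ^ d)⁻¹ := by
    rw [show (4 : ℝ) = 2 ^ (2 : ℝ) by norm_num, ← rpow_mul (by norm_num),
      show (2 : ℝ) * (-(d : ℝ) / 2) = -d by ring, rpow_neg (by norm_num), rpow_natCast]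
  have hexp : -‖x‖ ^ 2 / (4 * ν * s) =
      -(3 * ‖x‖ ^ 2) / (16 * ν * s) + -‖x‖ ^ 2 / (4 * ν * (4 * s)) := by
    field_simp
    ring
  simp only [heatKernel]
  rw [show 4 * Real.pi * ν * (4 * s) = 4 * (4 * Real.pi * ν * s) by ring,
    mul_rpow (x := 4) (by norm_num) (by positivity), hfour, hexp, exp_add]
  field_simp

lemma sq_norm_mul_abs_pderiv_pderiv_heatKernel_le (hν : 0 < ν) (hs : 0 < s) (i j : Fin d)
    (x : EuclideanSpace ℝ (Fin d)) :
    ‖x‖ ^ 2 * |pderiv i (pderiv j (heatKernel d ν s)) x| ≤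
      17 * 2 ^ d * heatKernel d ν (4 * s) x := by
  set u := 3 * ‖x‖ ^ 2 / (16 * ν * s)
  have hu : 0 ≤ u := by positivity
  have hprefactor : ‖x‖ ^ 2 * ((2 * ν * s)⁻¹ + (2 * ν * s)⁻¹ ^ 2 * ‖x‖ ^ 2) =
      8 / 3 * u + 64 / 9 * u ^ 2 := by
    simp only [u]
    field_simp
    ring
  have hdecay : (8 / 3 * u + 64 / 9 * u ^ 2) * exp (-u) ≤ 17 := by
    have h1 := pow_mul_exp_neg_le_factorial hu 1
    have h2 := pow_mul_exp_neg_le_factorial hu 2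
    norm_num [Nat.factorial] at h1 h2
    nlinarith
  have hp4 := heatKernel_pos hν (by positivity : 0 < 4 * s) x
  calc ‖x‖ ^ 2 * |pderiv i (pderiv j (heatKernel d ν s)) x|
      ≤ ‖x‖ ^ 2 * (((2 * ν * s)⁻¹ + (2 * ν * s)⁻¹ ^ 2 * ‖x‖ ^ 2) * heatKernel d ν s x) := by
        gcongr; exact abs_pderiv_pderiv_heatKernel_le hν hs i j x
    _ = (8 / 3 * u + 64 / 9 * u ^ 2) * exp (-u) * (2 ^ d * heatKernel d ν (4 * s) x) := by
        rw [heatKernel_eq_mul_heatKernel_four_mul hν hs, ← hprefactor, neg_div]; ring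
    _ ≤ 17 * (2 ^ d * heatKernel d ν (4 * s) x) := by gcongr
    _ = 17 * 2 ^ d * heatKernel d ν (4 * s) x := by ring

end HeatKernel

theorem stmt17_general (d : ℕ) :
    ∃ c > 0, ∀ (ν : ℝ), 0 < ν → ∀ (i j : Fin d)
      (z₁ z₂ : EuclideanSpace ℝ (Fin d)) (t₁ t₂ : ℝ),
      0 < t₁ → t₁ < t₂ → t₂ ≤ 2 * t₁ →
      (d : ℝ) * ν * t₁ ≤ ‖z₂ - z₁‖ ^ 2 →
      |pderiv i (pderiv j (heatKernel d ν (t₂ - t₁))) (z₂ - z₁)| ≤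
        c * (ν * (t₂ - t₁)) ^ (-(1 : ℝ) / 2) * (ν * t₁) ^ (-(1 : ℝ) / 2) *
          heatKernel d ν (4 * (t₂ - t₁)) (z₂ - z₁) := by
  refine ⟨17 * 2 ^ d, by positivity, fun ν hν i j z₁ z₂ t₁ t₂ ht₁ h₁₂ h₂₁ hfar => ?_⟩
  have hs : 0 < t₂ - t₁ := sub_pos.mpr h₁₂
  have hd : (1 : ℝ) ≤ d := by exact_mod_cast i.pos
  have hT : ν * t₁ ≤ ‖z₂ - z₁‖ ^ 2 :=
    le_trans (by nlinarith [mul_pos hν ht₁]) hfar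
  have hqT : ν * (t₂ - t₁) ≤ ν * t₁ := by gcongr; linarith
  have hx : 0 < ‖z₂ - z₁‖ ^ 2 := (mul_pos hν ht₁).trans_le hT
  have hp4 := heatKernel_pos hν (by positivity : 0 < 4 * (t₂ - t₁)) (z₂ - z₁)
  calc |pderiv i (pderiv j (heatKernel d ν (t₂ - t₁))) (z₂ - z₁)|
      ≤ (‖z₂ - z₁‖ ^ 2)⁻¹ * (17 * 2 ^ d * heatKernel d ν (4 * (t₂ - t₁)) (z₂ - z₁)) := by
        rw [le_inv_mul_iff₀ hx]
        exact sq_norm_mul_abs_pderiv_pderiv_heatKernel_le hν hs i j _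
    _ ≤ (ν * (t₂ - t₁)) ^ (-(1 : ℝ) / 2) * (ν * t₁) ^ (-(1 : ℝ) / 2) *
          (17 * 2 ^ d * heatKernel d ν (4 * (t₂ - t₁)) (z₂ - z₁)) := by
        gcongr
        exact inv_le_rpow_neg_half_mul_rpow_neg_half (by positivity) (by positivity)
          (hqT.trans hT) hT
    _ = _ := by ring

/-- off-diagonal bound for second spatial derivatives of the heat kernel on the
region `t₁ ≤ t₂ ≤ 2t₁`, `|z₂-z₁|² ≥ dνt₁`. -/
theorem stmt17 (d : ℕ) (hd : 1 ≤ d) :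
    ∃ c > 0, ∀ (ν : ℝ), 0 < ν → ∀ (i j : Fin d)
      (z₁ z₂ : EuclideanSpace ℝ (Fin d)) (t₁ t₂ : ℝ),
      0 < t₁ → t₁ < t₂ → t₂ ≤ 2 * t₁ →
      (d : ℝ) * ν * t₁ ≤ ‖z₂ - z₁‖ ^ 2 →
      |pderiv i (pderiv j (heatKernel d ν (t₂ - t₁))) (z₂ - z₁)| ≤
        c * (ν * (t₂ - t₁)) ^ (-(1 : ℝ) / 2) * (ν * t₁) ^ (-(1 : ℝ) / 2) *
          heatKernel d ν (4 * (t₂ - t₁)) (z₂ - z₁) :=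
  stmt17_general d
end
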